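/- arXiv:math/0208081 — 2 statements merged into one kernel-verified Lean document; each statement's English description precedes it below -/
import Mathlib

section
/- Let A be a G-Frobenius algebra over k and α a normalized 2-cocycle on G with values in kˣ; set ε(g,h) := α(g,h)·α(g*h*g⁻¹,g)⁻¹. Form the G-Frobenius tensor product A ⊗̂ k^α[G], whose underlying graded space is ⊕_{g∈G} (A_g ⊗ (k^α[G])_g) with componentwise multiplication (a⊗x)(b⊗y) = (a·b)⊗(x·y), unit 1⊗ê, form η⊗η', diagonal G-action φ⊗φ', and product character. Then the map a ⊗ ĝ ↦ a (for a ∈ A_g) is an isomorphism of G-Frobenius algebras from A ⊗̂ k^α[G] to the twist s(α,ε)(A) = (G, A, ∘^α, 1, η^α, φ^ε, χ), where a ∘^α b = α(g,h)·(a∘b) for a ∈ A_g, b ∈ A_h, η^α(a,b) = α(g,g⁻¹)·η(a,b) for a ∈ A_g, b ∈ A_{g⁻¹}, and φ^ε_g(a) = ε(g,h)·φ_g(a) for a ∈ A_h. Here an isomorphism of G-Frobenius algebras is a grading-preserving k-linear bijection that intertwines multiplications, units, bilinear forms, G-actions, and characters. -/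
/-!
The map `a ⊗ ĝ ↦ a` is inverted on `A ⊗̂ k^α[G]` by `a ↦ ∑_g proj_g a ⊗ ĝ`. Since
`(a ⊗ ĝ)(b ⊗ ĥ) = α(g,h) ab ⊗ (gh)^`, it carries each structure map of `A ⊗̂ k^α[G]` to the
corresponding map of `A` rescaled, degree by degree, by a value of `α` or of `ε`. These rescaled
maps are `k`-linear, so each axiom of a `G`-Frobenius algebra needs checking only on homogeneous
elements, where it becomes the corresponding axiom of `A` together with an identity between
values of `α` and `ε`: `ε(st,h) = ε(s,tht⁻¹) ε(t,h)`,
`ε(g,xy) α(x,y) = ε(g,x) ε(g,y) α(gxg⁻¹,gyg⁻¹)`, and a similar one for the trace axiom. All of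
them follow from the cocycle rule and the normalization `α(1,1) = 1`.
-/

/-- A `G`-Frobenius algebra over a field `k` of characteristic zero (Kaufmann):
a finite-dimensional `G`-graded `k`-vector space `A = ⊕_g A_g` (the grading given by
submodules together with the projections onto them), with an associative bilinear
multiplication respecting the grading, unit `1 ∈ A_e`, a nondegenerate graded invariant
bilinear form `η`, a `G`-action `φ` by algebra automorphisms with
`φ_g(A_h) ⊆ A_{g h g⁻¹}`, and a character `χ : G → kˣ`, satisfying twisted
commutativity, projective self-invariance, projective invariance of the metric and the
projective trace axiom. -/
structure GFrobeniusAlgebra (G : Type) [Group G] [Fintype G]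
    (k : Type) [Field k] [CharZero k]
    (A : Type) [AddCommGroup A] [Module k A] : Type where
  grading : G → Submodule k A
  proj : G → A →ₗ[k] A
  proj_mem : ∀ (g : G) (a : A), proj g a ∈ grading g
  proj_of_mem : ∀ (g : G), ∀ a ∈ grading g, proj g a = a
  proj_of_ne : ∀ (g h : G), g ≠ h → ∀ a ∈ grading g, proj h a = 0
  sum_proj : ∀ a : A, (∑ g : G, proj g a) = a
  finiteDim : FiniteDimensional k A
  mul : A →ₗ[k] A →ₗ[k] A
  mul_assoc' : ∀ a b c : A, mul (mul a b) c = mul a (mul b c)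
  one : A
  one_mem : one ∈ grading 1
  one_mul' : ∀ a : A, mul one a = a
  mul_one' : ∀ a : A, mul a one = a
  mul_mem : ∀ (g h : G), ∀ a ∈ grading g, ∀ b ∈ grading h, mul a b ∈ grading (g * h)
  η : A →ₗ[k] A →ₗ[k] k
  η_nondeg : ∀ a : A, (∀ b : A, η a b = 0) → a = 0
  η_graded : ∀ (g h : G), g * h ≠ 1 → ∀ a ∈ grading g, ∀ b ∈ grading h, η a b = 0
  η_invariant : ∀ a b c : A, η a (mul b c) = η (mul a b) c
  φ : G → A →ₗ[k] A
  φ_one : φ 1 = LinearMap.id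
  φ_mul : ∀ g h : G, φ (g * h) = φ g ∘ₗ φ h
  φ_algebra : ∀ (g : G) (a b : A), φ g (mul a b) = mul (φ g a) (φ g b)
  φ_unit : ∀ g : G, φ g one = one
  φ_grading : ∀ (g h : G), ∀ a ∈ grading h, φ g a ∈ grading (g * h * g⁻¹)
  χ : G →* kˣ
  twisted_comm : ∀ (g : G), ∀ a ∈ grading g, ∀ b : A, mul a b = mul (φ g b) a
  self_invariance : ∀ (g : G), ∀ a ∈ grading g, φ g a = (((χ g)⁻¹ : kˣ) : k) • a
  metric_invariance : ∀ (g : G) (a b : A),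
    η (φ g a) (φ g b) = ((((χ g)⁻¹ : kˣ) : k)) ^ 2 * η a b
  trace_axiom : ∀ (g h : G), ∀ c ∈ grading (g * h * g⁻¹ * h⁻¹),
    ((χ h : kˣ) : k) * LinearMap.trace k A (proj g ∘ₗ mul c ∘ₗ φ h ∘ₗ proj g)
      = ((χ g⁻¹ : kˣ) : k) * LinearMap.trace k A (proj h ∘ₗ φ g⁻¹ ∘ₗ mul c ∘ₗ proj h)

/-- The multiplication of the twisted group ring `k^α[G]` on `G →₀ k`
(basis `ĝ = Finsupp.single g 1`), determined bilinearly by `ĝ · ĥ = α(g,h) • (g*h)^`. -/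
noncomputable def twistedMul {G : Type} [Group G] {k : Type} [Field k]
    (α : G → G → kˣ) (f₁ f₂ : G →₀ k) : G →₀ k :=
  f₁.sum fun x a => f₂.sum fun y b => Finsupp.single (x * y) (a * b * (α x y : k))

/-- The linear map `A ⊗ k[G] → A` sending `a ⊗ ĝ ↦ proj_g(a)`; on the Frobenius tensor
product `A ⊗̂ k^α[G] = ⊕_g A_g ⊗ k·ĝ ⊆ A ⊗ k[G]` it is the map `a ⊗ ĝ ↦ a` (for
`a ∈ A_g`). -/
noncomputable def Phi {G : Type} [Group G] [Fintype G] {k : Type} [Field k] [CharZero k]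
    {A : Type} [AddCommGroup A] [Module k A] (F : GFrobeniusAlgebra G k A) :
    TensorProduct k A (G →₀ k) →ₗ[k] A :=
  TensorProduct.lift
    (LinearMap.flip
      (Finsupp.lsum k fun g => LinearMap.toSpanSingleton k (A →ₗ[k] A) (F.proj g)))

/-- The underlying subspace of the Frobenius tensor product `A ⊗̂ k^α[G]`, namely
`⊕_g A_g ⊗ k·ĝ ⊆ A ⊗ k[G]`. -/
noncomputable def hatTensor {G : Type} [Group G] [Fintype G] {k : Type} [Field k]
    [CharZero k] {A : Type} [AddCommGroup A] [Module k A] (F : GFrobeniusAlgebra G k A) :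
    Submodule k (TensorProduct k A (G →₀ k)) :=
  Submodule.span k
    {x | ∃ g : G, ∃ a ∈ F.grading g, x = a ⊗ₜ[k] Finsupp.single g (1 : k)}

def IsTwoCocycle {G M : Type*} [Mul G] [CommMonoid M] (α : G → G → M) : Prop :=
  ∀ g h l : G, α g h * α (g * h) l = α h l * α g (h * l)

/-- The scalar `ε(g, h)` by which conjugation by `ĝ` acts on `ĥ` in `k^α[G]`:
`ĝ ĥ ĝ⁻¹ = ε(g, h) (g h g⁻¹)^`. -/
def conjFactor {G M : Type*} [Group G] [CommGroup M] (α : G → G → M) (g h : G) : M :=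
  α g h * (α (g * h * g⁻¹) g)⁻¹

section Cocycle

variable {G M : Type*} [Group G] [CommGroup M] {α : G → G → M}

theorem IsTwoCocycle.map_one_left (hα : IsTwoCocycle α) (h1 : α 1 1 = 1) (g : G) :
    α 1 g = 1 := by
  simpa [h1] using hα 1 1 g

theorem IsTwoCocycle.map_one_right (hα : IsTwoCocycle α) (h1 : α 1 1 = 1) (g : G) :
    α g 1 = 1 := by
  simpa [h1] using hα g 1 1

theorem conjFactor_mul_self_conj (α : G → G → M) (g h : G) :
    conjFactor α g h * α (g * h * g⁻¹) g = α g h :=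
  inv_mul_cancel_right _ _

theorem conjFactor_self (α : G → G → M) (g : G) : conjFactor α g g = 1 := by
  simp [conjFactor]

theorem conjFactor_one_left (hα : IsTwoCocycle α) (h1 : α 1 1 = 1) (h : G) :
    conjFactor α 1 h = 1 := by
  simp [conjFactor, hα.map_one_left h1, hα.map_one_right h1]

theorem conjFactor_one_right (hα : IsTwoCocycle α) (h1 : α 1 1 = 1) (g : G) :
    conjFactor α g 1 = 1 := by
  simp [conjFactor, hα.map_one_left h1, hα.map_one_right h1]

theorem conjFactor_mul_left (hα : IsTwoCocycle α) (s t h : G) :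
    conjFactor α (s * t) h = conjFactor α s (t * h * t⁻¹) * conjFactor α t h := by
  -- In `Additive M` this is a `±1`-combination of three instances of the cocycle rule.
  have h₁ := congrArg Additive.ofMul (hα s t h)
  have h₂ := congrArg Additive.ofMul (hα (s * t * h * t⁻¹ * s⁻¹) s t)
  have h₃ := congrArg Additive.ofMul (hα s (t * h * t⁻¹) t)
  apply Additive.ofMul.injective
  simp only [conjFactor, ofMul_mul, ofMul_inv] at *
  group at *
  linear_combination (norm := abel) h₁ + h₂ - h₃

theorem conjFactor_mul_right (hα : IsTwoCocycle α) (g x y : G) :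
    conjFactor α g (x * y) * α x y
      = conjFactor α g x * conjFactor α g y * α (g * x * g⁻¹) (g * y * g⁻¹) := by
  have h₁ := congrArg Additive.ofMul (hα g x y)
  have h₂ := congrArg Additive.ofMul (hα (g * x * g⁻¹) g y)
  have h₃ := congrArg Additive.ofMul (hα (g * x * g⁻¹) (g * y * g⁻¹) g)
  apply Additive.ofMul.injective
  simp only [conjFactor, ofMul_mul, ofMul_inv] at *
  group at *
  linear_combination (norm := abel) -h₁ + h₂ - h₃

theorem conjFactor_mul_conjFactor_inv (hα : IsTwoCocycle α) (h1 : α 1 1 = 1) (g x : G) :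
    conjFactor α g x * conjFactor α g x⁻¹ * α (g * x * g⁻¹) (g * x * g⁻¹)⁻¹ = α x x⁻¹ := by
  have h := conjFactor_mul_right hα g x x⁻¹
  rwa [mul_inv_cancel, conjFactor_one_right hα h1, one_mul,
    show g * x⁻¹ * g⁻¹ = (g * x * g⁻¹)⁻¹ by group, eq_comm] at h

theorem conjFactor_inv_conj (hα : IsTwoCocycle α) (h1 : α 1 1 = 1) (g h : G) :
    conjFactor α g⁻¹ (g * h * g⁻¹) = (conjFactor α g h)⁻¹ := by
  have h := conjFactor_mul_left hα g⁻¹ g h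
  rwa [inv_mul_cancel, conjFactor_one_left hα h1, eq_comm, mul_eq_one_iff_eq_inv] at h

theorem conjFactor_commutator (hα : IsTwoCocycle α) (h1 : α 1 1 = 1) (g h : G) :
    conjFactor α h g * α (g * h * g⁻¹ * h⁻¹) (h * g * h⁻¹)
      = α (g * h * g⁻¹ * h⁻¹) h * conjFactor α g⁻¹ (g * h * g⁻¹) := by
  have h₁ := congrArg Additive.ofMul (hα (g * h * g⁻¹ * h⁻¹) (h * g * h⁻¹) h)
  have h₂ := congrArg Additive.ofMul (hα (g * h * g⁻¹ * h⁻¹) h g)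
  rw [conjFactor_inv_conj hα h1]
  apply Additive.ofMul.injective
  simp only [conjFactor, ofMul_mul, ofMul_inv] at *
  group at *
  linear_combination (norm := abel) h₁ - h₂

end Cocycle

namespace GFrobeniusAlgebra

variable {G : Type} [Group G] [Fintype G] {k : Type} [Field k] [CharZero k]
  {A : Type} [AddCommGroup A] [Module k A] (F : GFrobeniusAlgebra G k A)

theorem sum_apply_proj_of_mem {M : Type*} [AddCommMonoid M] (f : G → A → M)
    (hf : ∀ g, f g 0 = 0) {x : G} {a : A} (ha : a ∈ F.grading x) :
    ∑ g, f g (F.proj g a) = f x a := by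
  rw [Finset.sum_eq_single x (fun g _ hg => by rw [F.proj_of_ne x g (Ne.symm hg) a ha, hf])
    (by simp), F.proj_of_mem x a ha]

theorem induction_on_homogeneous {P : A → Prop} (a : A)
    (add : ∀ a b, P a → P b → P (a + b)) (hom : ∀ g, ∀ a ∈ F.grading g, P a) : P a := by
  rw [← F.sum_proj a]
  exact Finset.sum_induction _ P add (hom 1 0 (zero_mem _)) fun g _ => hom g _ (F.proj_mem g a)

theorem linearMap_ext {M : Type*} [AddCommMonoid M] [Module k M] {f f' : A →ₗ[k] M}
    (h : ∀ g, ∀ a ∈ F.grading g, f a = f' a) : f = f' :=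
  LinearMap.ext fun a => F.induction_on_homogeneous a
    (fun a b ha hb => by rw [map_add, map_add, ha, hb]) h

def scaleByDegree (c : G → kˣ) : A →ₗ[k] A :=
  ∑ g, (c g : k) • F.proj g

theorem scaleByDegree_apply_of_mem (c : G → kˣ) {g : G} {a : A} (ha : a ∈ F.grading g) :
    F.scaleByDegree c a = (c g : k) • a := by
  simpa [scaleByDegree] using F.sum_apply_proj_of_mem (fun g a => (c g : k) • a) (by simp) ha

theorem scaleByDegree_inv_comp (c : G → kˣ) :
    F.scaleByDegree (fun g => (c g)⁻¹) ∘ₗ F.scaleByDegree c = LinearMap.id :=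
  F.linearMap_ext fun g a ha => by
    rw [LinearMap.comp_apply, F.scaleByDegree_apply_of_mem c ha, map_smul,
      F.scaleByDegree_apply_of_mem _ ha, smul_smul, ← Units.val_mul, mul_inv_cancel,
      Units.val_one, one_smul, LinearMap.id_apply]

theorem scaleByDegree_injective (c : G → kˣ) : Function.Injective (F.scaleByDegree c) :=
  Function.LeftInverse.injective (g := F.scaleByDegree fun g => (c g)⁻¹)
    (LinearMap.congr_fun (F.scaleByDegree_inv_comp c))

def twistMul (α : G → G → kˣ) : A →ₗ[k] A →ₗ[k] A :=
  ∑ g, (F.mul ∘ₗ F.proj g).compl₂ (F.scaleByDegree (α g))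

def twistη (α : G → G → kˣ) : A →ₗ[k] A →ₗ[k] k :=
  F.η ∘ₗ F.scaleByDegree fun g => α g g⁻¹

def twistφ (ε : G → G → kˣ) (g : G) : A →ₗ[k] A :=
  F.φ g ∘ₗ F.scaleByDegree (ε g)

variable {F}

theorem twistMul_apply_of_mem (α : G → G → kˣ) {g h : G} {a b : A} (ha : a ∈ F.grading g)
    (hb : b ∈ F.grading h) : F.twistMul α a b = (α g h : k) • F.mul a b := by
  have := F.sum_apply_proj_of_mem (fun g a => F.mul a (F.scaleByDegree (α g) b)) (by simp) ha
  simp only [twistMul, LinearMap.sum_apply, LinearMap.compl₂_apply, LinearMap.comp_apply]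
  rw [this, F.scaleByDegree_apply_of_mem _ hb, map_smul]

theorem twistη_apply_of_mem (α : G → G → kˣ) {g : G} {a : A} (ha : a ∈ F.grading g)
    (b : A) : F.twistη α a b = α g g⁻¹ * F.η a b := by
  rw [twistη, LinearMap.comp_apply, F.scaleByDegree_apply_of_mem _ ha, map_smul,
    LinearMap.smul_apply, smul_eq_mul]

theorem twistφ_apply_of_mem (ε : G → G → kˣ) (g : G) {h : G} {a : A}
    (ha : a ∈ F.grading h) : F.twistφ ε g a = (ε g h : k) • F.φ g a := by
  rw [twistφ, LinearMap.comp_apply, F.scaleByDegree_apply_of_mem _ ha, map_smul]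

variable {α : G → G → kˣ}

theorem twistMul_assoc (hα : IsTwoCocycle α) (a b c : A) :
    F.twistMul α (F.twistMul α a b) c = F.twistMul α a (F.twistMul α b c) := by
  induction a using F.induction_on_homogeneous with
  | add a a' ha ha' => simp only [map_add, LinearMap.add_apply, ha, ha']
  | hom x a ha =>
    induction b using F.induction_on_homogeneous with
    | add b b' hb hb' => simp only [map_add, LinearMap.add_apply, hb, hb']
    | hom y b hb =>
      induction c using F.induction_on_homogeneous with
      | add c c' hc hc' => simp only [map_add, hc, hc']
      | hom z c hc =>
        rw [twistMul_apply_of_mem α ha hb, twistMul_apply_of_mem α hb hc, map_smul, map_smul,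
          LinearMap.smul_apply, twistMul_apply_of_mem α (F.mul_mem x y a ha b hb) hc,
          twistMul_apply_of_mem α ha (F.mul_mem y z b hb c hc), F.mul_assoc', smul_smul, smul_smul,
          ← Units.val_mul, ← Units.val_mul, hα x y z]

theorem one_twistMul (hα : IsTwoCocycle α) (h1 : α 1 1 = 1) (a : A) :
    F.twistMul α F.one a = a := by
  induction a using F.induction_on_homogeneous with
  | add a a' ha ha' => rw [map_add, ha, ha']
  | hom x a ha =>
    rw [twistMul_apply_of_mem α F.one_mem ha, hα.map_one_left h1, Units.val_one, one_smul,
      F.one_mul']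

theorem twistMul_one (hα : IsTwoCocycle α) (h1 : α 1 1 = 1) (a : A) :
    F.twistMul α a F.one = a := by
  induction a using F.induction_on_homogeneous with
  | add a a' ha ha' => rw [map_add, LinearMap.add_apply, ha, ha']
  | hom x a ha =>
    rw [twistMul_apply_of_mem α ha F.one_mem, hα.map_one_right h1, Units.val_one, one_smul,
      F.mul_one']

theorem twistMul_mem {g h : G} {a b : A} (ha : a ∈ F.grading g) (hb : b ∈ F.grading h) :
    F.twistMul α a b ∈ F.grading (g * h) := by
  rw [twistMul_apply_of_mem α ha hb]
  exact Submodule.smul_mem _ _ (F.mul_mem g h a ha b hb)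

theorem twistη_nondeg (a : A) (ha : ∀ b, F.twistη α a b = 0) : a = 0 :=
  F.scaleByDegree_injective _ <| by
    rw [map_zero]
    exact F.η_nondeg _ ha

theorem twistη_graded {g h : G} (hgh : g * h ≠ 1) {a b : A} (ha : a ∈ F.grading g)
    (hb : b ∈ F.grading h) : F.twistη α a b = 0 := by
  rw [twistη_apply_of_mem α ha, F.η_graded g h hgh a ha b hb, mul_zero]

theorem twistη_apply_of_mem_of_mem [DecidableEq G] {g h : G} {a b : A}
    (ha : a ∈ F.grading g) (hb : b ∈ F.grading h) :
    F.twistη α a b = F.η a b * if h = g⁻¹ then (α g g⁻¹ : k) else 0 := by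
  split_ifs with hinv
  · rw [twistη_apply_of_mem α ha, mul_comm]
  · rw [twistη_graded (fun e => hinv (eq_inv_of_mul_eq_one_right e)) ha hb, mul_zero]

theorem twistη_twistMul (hα : IsTwoCocycle α) (a b c : A) :
    F.twistη α a (F.twistMul α b c) = F.twistη α (F.twistMul α a b) c := by
  induction a using F.induction_on_homogeneous with
  | add a a' ha ha' => simp only [map_add, LinearMap.add_apply, ha, ha']
  | hom x a ha =>
    induction b using F.induction_on_homogeneous with
    | add b b' hb hb' => simp only [map_add, LinearMap.add_apply, hb, hb']
    | hom y b hb =>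
      induction c using F.induction_on_homogeneous with
      | add c c' hc hc' => simp only [map_add, hc, hc']
      | hom z c hc =>
        rw [twistMul_apply_of_mem α hb hc, twistMul_apply_of_mem α ha hb, map_smul, map_smul,
          LinearMap.smul_apply, twistη_apply_of_mem α ha,
          twistη_apply_of_mem α (F.mul_mem x y a ha b hb), F.η_invariant, smul_eq_mul, smul_eq_mul]
        by_cases hxyz : x * y * z = 1
        · rw [inv_eq_of_mul_eq_one_right hxyz, inv_eq_of_mul_eq_one_right (by rwa [← mul_assoc])]
          have := congrArg Units.val (hα x y z)
          push_cast at this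
          linear_combination -F.η (F.mul a b) c * this
        · rw [F.η_graded _ z hxyz _ (F.mul_mem x y a ha b hb) c hc]
          ring

theorem twistφ_mem (ε : G → G → kˣ) (g : G) {h : G} {a : A} (ha : a ∈ F.grading h) :
    F.twistφ ε g a ∈ F.grading (g * h * g⁻¹) := by
  rw [twistφ_apply_of_mem ε g ha]
  exact Submodule.smul_mem _ _ (F.φ_grading g h a ha)

theorem twistφ_one (hα : IsTwoCocycle α) (h1 : α 1 1 = 1) :
    F.twistφ (conjFactor α) 1 = LinearMap.id :=
  F.linearMap_ext fun x a ha => by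
    rw [twistφ_apply_of_mem _ 1 ha, conjFactor_one_left hα h1, Units.val_one, one_smul,
      F.φ_one]

theorem twistφ_mul (hα : IsTwoCocycle α) (g h : G) :
    F.twistφ (conjFactor α) (g * h) = F.twistφ (conjFactor α) g ∘ₗ F.twistφ (conjFactor α) h :=
  F.linearMap_ext fun x a ha => by
    rw [LinearMap.comp_apply, twistφ_apply_of_mem _ _ ha, twistφ_apply_of_mem _ h ha, map_smul,
      twistφ_apply_of_mem _ g (F.φ_grading h x a ha), F.φ_mul, LinearMap.comp_apply, smul_smul,
      ← Units.val_mul, conjFactor_mul_left hα, mul_comm]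

theorem twistφ_twistMul (hα : IsTwoCocycle α) (g : G) (a b : A) :
    F.twistφ (conjFactor α) g (F.twistMul α a b)
      = F.twistMul α (F.twistφ (conjFactor α) g a) (F.twistφ (conjFactor α) g b) := by
  induction a using F.induction_on_homogeneous with
  | add a a' ha ha' => simp only [map_add, LinearMap.add_apply, ha, ha']
  | hom x a ha =>
    induction b using F.induction_on_homogeneous with
    | add b b' hb hb' => simp only [map_add, hb, hb']
    | hom y b hb =>
      rw [twistMul_apply_of_mem α ha hb, map_smul,
        twistφ_apply_of_mem _ g (F.mul_mem x y a ha b hb), twistφ_apply_of_mem _ g ha, twistφ_apply_of_mem _ g hb, map_smul, map_smul,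
        LinearMap.smul_apply, twistMul_apply_of_mem α (F.φ_grading g x a ha) (F.φ_grading g y b hb),
        F.φ_algebra, smul_smul, smul_smul, smul_smul, ← Units.val_mul, ← Units.val_mul,
        ← Units.val_mul, mul_comm (α x y), conjFactor_mul_right hα, mul_comm (conjFactor α g y)]

theorem twistφ_unit (hα : IsTwoCocycle α) (h1 : α 1 1 = 1) (g : G) :
    F.twistφ (conjFactor α) g F.one = F.one := by
  rw [twistφ_apply_of_mem _ g F.one_mem, conjFactor_one_right hα h1, Units.val_one, one_smul,
    F.φ_unit]

theorem twistMul_twisted_comm {g : G} {a : A} (ha : a ∈ F.grading g) (b : A) :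
    F.twistMul α a b = F.twistMul α (F.twistφ (conjFactor α) g b) a := by
  induction b using F.induction_on_homogeneous with
  | add b b' hb hb' => simp only [map_add, LinearMap.add_apply, hb, hb']
  | hom y b hb =>
    rw [twistMul_apply_of_mem α ha hb, twistφ_apply_of_mem _ g hb, map_smul, LinearMap.smul_apply,
      twistMul_apply_of_mem α (F.φ_grading g y b hb) ha, F.twisted_comm g a ha b, smul_smul,
      ← Units.val_mul, conjFactor_mul_self_conj]

theorem twistφ_apply_of_mem_self {g : G} {a : A} (ha : a ∈ F.grading g) :
    F.twistφ (conjFactor α) g a = (((F.χ g)⁻¹ : kˣ) : k) • a := by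
  rw [twistφ_apply_of_mem _ g ha, conjFactor_self, Units.val_one, one_smul,
    F.self_invariance g a ha]

theorem twistη_twistφ (hα : IsTwoCocycle α) (h1 : α 1 1 = 1) (g : G) (a b : A) :
    F.twistη α (F.twistφ (conjFactor α) g a) (F.twistφ (conjFactor α) g b)
      = (((F.χ g)⁻¹ : kˣ) : k) ^ 2 * F.twistη α a b := by
  induction a using F.induction_on_homogeneous with
  | add a a' ha ha' => simp only [map_add, LinearMap.add_apply, mul_add, ha, ha']
  | hom x a ha =>
    induction b using F.induction_on_homogeneous with
    | add b b' hb hb' => simp only [map_add, mul_add, hb, hb']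
    | hom y b hb =>
      rw [twistφ_apply_of_mem _ g ha, twistφ_apply_of_mem _ g hb, map_smul, map_smul,
        LinearMap.smul_apply, twistη_apply_of_mem α (F.φ_grading g x a ha),
        twistη_apply_of_mem α ha, F.metric_invariance, smul_eq_mul, smul_eq_mul]
      by_cases hy : y = x⁻¹
      · subst hy
        have := congrArg Units.val (conjFactor_mul_conjFactor_inv hα h1 g x)
        push_cast at this
        linear_combination (((F.χ g)⁻¹ : kˣ) : k) ^ 2 * F.η a b * this
      · rw [F.η_graded x y (fun e => hy (eq_inv_of_mul_eq_one_right e)) a ha b hb]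
        ring

theorem twist_trace_axiom (hα : IsTwoCocycle α) (h1 : α 1 1 = 1) (g h : G) {c : A}
    (hc : c ∈ F.grading (g * h * g⁻¹ * h⁻¹)) :
    ((F.χ h : kˣ) : k) * LinearMap.trace k A
        (F.proj g ∘ₗ F.twistMul α c ∘ₗ F.twistφ (conjFactor α) h ∘ₗ F.proj g)
      = ((F.χ g⁻¹ : kˣ) : k) * LinearMap.trace k A
        (F.proj h ∘ₗ F.twistφ (conjFactor α) g⁻¹ ∘ₗ F.twistMul α c ∘ₗ F.proj h) := by
  have left : F.proj g ∘ₗ F.twistMul α c ∘ₗ F.twistφ (conjFactor α) h ∘ₗ F.proj g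
      = ((conjFactor α h g * α (g * h * g⁻¹ * h⁻¹) (h * g * h⁻¹) : kˣ) : k)
        • (F.proj g ∘ₗ F.mul c ∘ₗ F.φ h ∘ₗ F.proj g) := by
    ext a
    have ha := F.proj_mem g a
    simp only [LinearMap.comp_apply, LinearMap.smul_apply]
    rw [twistφ_apply_of_mem _ h ha, map_smul, twistMul_apply_of_mem α hc (F.φ_grading h g _ ha),
      smul_smul, map_smul, Units.val_mul, mul_comm]
  have right : F.proj h ∘ₗ F.twistφ (conjFactor α) g⁻¹ ∘ₗ F.twistMul α c ∘ₗ F.proj h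
      = ((α (g * h * g⁻¹ * h⁻¹) h * conjFactor α g⁻¹ (g * h * g⁻¹) : kˣ) : k)
        • (F.proj h ∘ₗ F.φ g⁻¹ ∘ₗ F.mul c ∘ₗ F.proj h) := by
    ext a
    have ha := F.proj_mem h a
    have hca : F.mul c (F.proj h a) ∈ F.grading (g * h * g⁻¹) := by
      simpa using F.mul_mem _ h c hc _ ha
    simp only [LinearMap.comp_apply, LinearMap.smul_apply]
    rw [twistMul_apply_of_mem α hc ha, map_smul, twistφ_apply_of_mem _ g⁻¹ hca, smul_smul,
      map_smul, Units.val_mul, mul_comm]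
  rw [left, right, map_smul, map_smul, smul_eq_mul, smul_eq_mul, conjFactor_commutator hα h1,
    mul_left_comm, F.trace_axiom g h c hc, mul_left_comm]

variable (F α) in
/-- The discrete-torsion twist `s(α, ε)(A)` with `ε = conjFactor α`. -/
def twist (hα : IsTwoCocycle α) (h1 : α 1 1 = 1) : GFrobeniusAlgebra G k A where
  __ := F
  mul := F.twistMul α
  mul_assoc' := twistMul_assoc hα
  one_mul' := one_twistMul hα h1
  mul_one' := twistMul_one hα h1
  mul_mem _ _ _ ha _ hb := twistMul_mem ha hb
  η := F.twistη α
  η_nondeg := twistη_nondeg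
  η_graded _ _ hgh _ ha _ hb := twistη_graded hgh ha hb
  η_invariant := twistη_twistMul hα
  φ := F.twistφ (conjFactor α)
  φ_one := twistφ_one hα h1
  φ_mul := twistφ_mul hα
  φ_algebra := twistφ_twistMul hα
  φ_unit := twistφ_unit hα h1
  φ_grading g _ _ ha := twistφ_mem _ g ha
  twisted_comm _ _ ha := twistMul_twisted_comm ha
  self_invariance _ _ ha := twistφ_apply_of_mem_self ha
  metric_invariance := twistη_twistφ hα h1
  trace_axiom g h _ hc := twist_trace_axiom hα h1 g h hc

end GFrobeniusAlgebra

theorem twistedMul_single {G : Type} [Group G] {k : Type} [Field k] (α : G → G → kˣ)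
    (g h : G) (a b : k) :
    twistedMul α (Finsupp.single g a) (Finsupp.single h b)
      = Finsupp.single (g * h) (a * b * α g h) := by
  simp [twistedMul]

section Phi

variable {G : Type} [Group G] [Fintype G] {k : Type} [Field k] [CharZero k]
  {A : Type} [AddCommGroup A] [Module k A] (F : GFrobeniusAlgebra G k A)

theorem Phi_tmul_single (a : A) (g : G) (c : k) :
    Phi F (a ⊗ₜ[k] Finsupp.single g c) = c • F.proj g a := by
  simp [Phi]

theorem Phi_tmul_single_one_of_mem {g : G} {a : A} (ha : a ∈ F.grading g) :
    Phi F (a ⊗ₜ[k] Finsupp.single g (1 : k)) = a := by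
  rw [Phi_tmul_single, one_smul, F.proj_of_mem g a ha]

noncomputable def toHatTensor : A →ₗ[k] TensorProduct k A (G →₀ k) :=
  ∑ g, (TensorProduct.mk k A (G →₀ k)).flip (Finsupp.single g 1) ∘ₗ F.proj g

theorem toHatTensor_apply (a : A) :
    toHatTensor F a = ∑ g, F.proj g a ⊗ₜ[k] Finsupp.single g (1 : k) := by
  simp [toHatTensor]

theorem toHatTensor_mem_hatTensor (a : A) : toHatTensor F a ∈ hatTensor F := by
  rw [toHatTensor_apply]
  exact Submodule.sum_mem _ fun g _ => Submodule.subset_span ⟨g, _, F.proj_mem g a, rfl⟩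

theorem Phi_toHatTensor (a : A) : Phi F (toHatTensor F a) = a := by
  simp only [toHatTensor_apply, map_sum, Phi_tmul_single, one_smul]
  rw [Finset.sum_congr rfl fun g _ => F.proj_of_mem g _ (F.proj_mem g a), F.sum_proj]

theorem toHatTensor_Phi {x : TensorProduct k A (G →₀ k)} (hx : x ∈ hatTensor F) :
    toHatTensor F (Phi F x) = x := by
  refine LinearMap.eqOn_span' (f := toHatTensor F ∘ₗ Phi F) (g := LinearMap.id) ?_ hx
  rintro _ ⟨g, a, ha, rfl⟩
  rw [LinearMap.comp_apply, Phi_tmul_single_one_of_mem F ha, toHatTensor_apply,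
    F.sum_apply_proj_of_mem (fun g a => a ⊗ₜ[k] Finsupp.single g (1 : k)) (by simp) ha,
    LinearMap.id_apply]

theorem Phi_mul_tmul_twistedMul (α : G → G → kˣ) {g h : G} {a b : A} (ha : a ∈ F.grading g)
    (hb : b ∈ F.grading h) :
    Phi F (F.mul a b ⊗ₜ[k] twistedMul α (Finsupp.single g 1) (Finsupp.single h 1))
      = F.twistMul α a b := by
  rw [twistedMul_single, Phi_tmul_single, one_mul, one_mul,
    F.proj_of_mem _ _ (F.mul_mem g h a ha b hb), F.twistMul_apply_of_mem α ha hb]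

theorem Phi_tmul_smul_single_conj (ε : G → G → kˣ) (g : G) {h : G} {a : A}
    (ha : a ∈ F.grading h) :
    Phi F (F.φ g a ⊗ₜ[k] ((ε g h : k) • Finsupp.single (g * h * g⁻¹) (1 : k)))
      = F.twistφ ε g a := by
  rw [TensorProduct.tmul_smul, map_smul,
    Phi_tmul_single_one_of_mem F (F.φ_grading g h a ha), F.twistφ_apply_of_mem ε g ha]

theorem injOn_Phi_hatTensor : Set.InjOn (Phi F) (hatTensor F) :=
  Set.LeftInvOn.injOn fun _ hx => toHatTensor_Phi F hx

theorem image_Phi_hatTensor : Phi F '' hatTensor F = Set.univ :=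
  Set.eq_univ_of_forall fun a => ⟨_, toHatTensor_mem_hatTensor F a, Phi_toHatTensor F a⟩

end Phi

/-- For a `G`-Frobenius algebra `A` and a normalized 2-cocycle `α` with
`ε(g,h) = α(g,h)·α(g*h*g⁻¹,g)⁻¹`, the map `a ⊗ ĝ ↦ a` (for `a ∈ A_g`) is an isomorphism of
`G`-Frobenius algebras from the tensor product `A ⊗̂ k^α[G]` (with componentwise
multiplication `(a⊗x)(b⊗y) = (a·b)⊗(x·y)`, unit `1⊗ê`, form `η⊗η'`, diagonal action and
product character) onto the discrete-torsion twist `s(α,ε)(A)`. -/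
theorem tensor_with_twisted_group_ring_is_twist (G : Type) [Group G] [Fintype G]
    [DecidableEq G] (k : Type) [Field k] [CharZero k]
    (A : Type) [AddCommGroup A] [Module k A] (F : GFrobeniusAlgebra G k A)
    (α : G → G → kˣ)
    (hcoc : ∀ g h l : G, α g h * α (g * h) l = α h l * α g (h * l))
    (hnorm : α 1 1 = 1)
    (ε : G → G → kˣ) (hε : ∀ g h : G, ε g h = α g h * (α (g * h * g⁻¹) g)⁻¹) :
    -- the map is `a ⊗ ĝ ↦ a` on the graded pieces `A_g ⊗ k·ĝ`
    (∀ g : G, ∀ a ∈ F.grading g, Phi F (a ⊗ₜ[k] Finsupp.single g (1 : k)) = a) ∧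
    -- it is a linear bijection from `A ⊗̂ k^α[G]` onto `A`
    Set.InjOn (Phi F) (hatTensor F : Set (TensorProduct k A (G →₀ k))) ∧
    (Phi F) '' (hatTensor F : Set (TensorProduct k A (G →₀ k))) = Set.univ ∧
    -- and it intertwines all structures with those of the twist `s(α,ε)(A)`
    (∃ F' : GFrobeniusAlgebra G k A,
      -- `F'` is the twist `s(α,ε)(A)`:
      F'.grading = F.grading ∧
      F'.proj = F.proj ∧
      F'.one = F.one ∧
      F'.χ = F.χ ∧
      (∀ (g h : G), ∀ a ∈ F.grading g, ∀ b ∈ F.grading h,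
        F'.mul a b = ((α g h : kˣ) : k) • F.mul a b) ∧
      (∀ g : G, ∀ a ∈ F.grading g, ∀ b ∈ F.grading g⁻¹,
        F'.η a b = ((α g g⁻¹ : kˣ) : k) * F.η a b) ∧
      (∀ (g h : G), ∀ a ∈ F.grading h,
        F'.φ g a = ((ε g h : kˣ) : k) • F.φ g a) ∧
      -- `Phi` intertwines the multiplications:
      (∀ (g h : G), ∀ a ∈ F.grading g, ∀ b ∈ F.grading h,
        Phi F ((F.mul a b) ⊗ₜ[k]
            twistedMul α (Finsupp.single g (1 : k)) (Finsupp.single h (1 : k)))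
          = F'.mul (Phi F (a ⊗ₜ[k] Finsupp.single g (1 : k)))
              (Phi F (b ⊗ₜ[k] Finsupp.single h (1 : k)))) ∧
      -- the units:
      Phi F (F.one ⊗ₜ[k] Finsupp.single (1 : G) (1 : k)) = F'.one ∧
      -- the bilinear forms (`η ⊗ η'` with `η'(ĝ,ĥ) = α(g,g⁻¹)` if `h = g⁻¹`, else `0`):
      (∀ (g h : G), ∀ a ∈ F.grading g, ∀ b ∈ F.grading h,
        F'.η (Phi F (a ⊗ₜ[k] Finsupp.single g (1 : k)))
            (Phi F (b ⊗ₜ[k] Finsupp.single h (1 : k)))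
          = F.η a b * (if h = g⁻¹ then ((α g g⁻¹ : kˣ) : k) else 0)) ∧
      -- and the `G`-actions (`φ ⊗ φ'` with `φ'_g(ĥ) = ε(g,h)·(g*h*g⁻¹)^`):
      (∀ (g h : G), ∀ a ∈ F.grading h,
        F'.φ g (Phi F (a ⊗ₜ[k] Finsupp.single h (1 : k)))
          = Phi F ((F.φ g a) ⊗ₜ[k]
              (((ε g h : kˣ) : k) • Finsupp.single (g * h * g⁻¹) (1 : k))))) := by
  obtain rfl : ε = conjFactor α := funext₂ hε
  refine ⟨fun g a ha => Phi_tmul_single_one_of_mem F ha, injOn_Phi_hatTensor F,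
    image_Phi_hatTensor F, F.twist α hcoc hnorm, rfl, rfl, rfl, rfl,
    fun g h a ha b hb => F.twistMul_apply_of_mem α ha hb,
    fun g a ha b _ => F.twistη_apply_of_mem α ha b,
    fun g h a ha => F.twistφ_apply_of_mem _ g ha,
    fun g h a ha b hb => ?_, Phi_tmul_single_one_of_mem F F.one_mem,
    fun g h a ha b hb => ?_, fun g h a ha => ?_⟩
  · rw [Phi_tmul_single_one_of_mem F ha, Phi_tmul_single_one_of_mem F hb]
    exact Phi_mul_tmul_twistedMul F α ha hb
  · rw [Phi_tmul_single_one_of_mem F ha, Phi_tmul_single_one_of_mem F hb]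
    exact F.twistη_apply_of_mem_of_mem ha hb
  · rw [Phi_tmul_single_one_of_mem F ha]
    exact (Phi_tmul_smul_single_conj F _ g ha).symm
end

section
/- Let H be an abelian group, k a field, and B = ⊕_{h∈H} B_h an H-graded associative unital k-algebra with unit 1 ∈ B_e and B_h·B_{h'} ⊆ B_{h·h'}, equipped with an additional H-action τ : H → GL_k(B) (a group homomorphism into k-linear automorphisms) such that τ(h)(B_{h'}) ⊆ B_{h·h'} and τ(h)(a·b) = a·τ(h)(b) for all a,b ∈ B and h ∈ H (i.e. B is H-homogeneous). Then for every h ∈ H: (i) B_h = B_e·τ(h)(1); (ii) the map B_e → B_h given by a ↦ a·τ(h)(1) is a k-linear isomorphism; and (iii) for all h, h' ∈ H the k-linear span of the products B_h·B_{h'} equals B_{h·h'} (B is k[H]-Galois over B_e). In particular all graded components of B are isomorphic as B_e-modules. -/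
/-!
Equivariance for left multiplication gives `τ(h)(b) = τ(h)(b · 1) = b · τ(h)(1)`, so `τ(h)` is right
multiplication by `τ(h)(1)`. Since `τ(h)` is invertible with inverse `τ(h⁻¹)` and shifts degrees by
`h`, it maps `B_{h'}` bijectively onto `B_{h·h'}`; this gives (i) and (ii), and writing
`x ∈ B_{h·h'}` as `τ(h')(y) = y · τ(h')(1)` with `y ∈ B_h` and `τ(h')(1) ∈ B_{h'}` gives (iii).
-/

theorem apply_eq_mul_apply_one {B : Type*} [MulOneClass B] {f : B → B}
    (hf : ∀ a b, f (a * b) = a * f b) (b : B) : f b = b * f 1 := by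
  simpa using hf b 1

theorem MonoidHom.linearEquiv_apply_inv_apply {H k M : Type*} [Group H] [Semiring k]
    [AddCommMonoid M] [Module k M] (τ : H →* (M ≃ₗ[k] M)) (g : H) (x : M) :
    τ g (τ g⁻¹ x) = x := by
  rw [← LinearEquiv.mul_apply, ← map_mul, mul_inv_cancel, map_one, LinearEquiv.coe_one, id_eq]

theorem image_grading_eq_of_shift {H k M : Type*} [Group H] [Semiring k] [AddCommMonoid M]
    [Module k M] {grading : H → Submodule k M} {τ : H →* (M ≃ₗ[k] M)}
    (τ_grading : ∀ (g h : H), ∀ x ∈ grading h, τ g x ∈ grading (g * h)) (g h : H) :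
    τ g '' (grading h : Set M) = grading (g * h) := by
  refine Set.Subset.antisymm (Set.image_subset_iff.2 fun x hx ↦ τ_grading g h x hx)
    fun x hx ↦ ⟨τ g⁻¹ x, ?_, τ.linearEquiv_apply_inv_apply g x⟩
  simpa using τ_grading g⁻¹ (g * h) x hx

/-- Let `B = ⊕_h B_h` be an `H`-graded associative unital `k`-algebra (`H`
an abelian group) which is `H`-homogeneous: it carries a second `H`-action `τ` by `k`-linear
automorphisms with `τ(h)(B_{h'}) ⊆ B_{h·h'}` and `τ(h)(a·b) = a·τ(h)(b)`. Then for all `h`: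
(i) `B_h = B_e · τ(h)(1)`; (ii) `a ↦ a·τ(h)(1)` is a `k`-linear isomorphism `B_e ≅ B_h`;
(iii) the span of `B_h·B_{h'}` is `B_{h·h'}` (`B` is `k[H]`-Galois over `B_e`). In
particular all graded components of `B` are isomorphic as `B_e`-modules. -/
theorem homogeneous_algebra_is_galois {H : Type*} [CommGroup H] {k : Type*} [Field k]
    {B : Type*} [Ring B] [Algebra k B]
    (grading : H → Submodule k B)
    (one_mem : (1 : B) ∈ grading 1)
    (mul_mem : ∀ (h h' : H), ∀ a ∈ grading h, ∀ b ∈ grading h', a * b ∈ grading (h * h'))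
    (τ : H →* (B ≃ₗ[k] B))
    (τ_grading : ∀ (h h' : H), ∀ b ∈ grading h', τ h b ∈ grading (h * h'))
    (τ_equivariant : ∀ (h : H) (a b : B), τ h (a * b) = a * τ h b) :
    ∀ h : H,
      -- (i) `B_h = B_e · τ(h)(1)`
      ((fun a => a * τ h (1 : B)) '' (grading (1 : H) : Set B) = (grading h : Set B)) ∧
      -- (ii) `a ↦ a · τ(h)(1)` is injective on `B_e` (hence a `k`-linear isomorphism)
      Set.InjOn (fun a => a * τ h (1 : B)) (grading (1 : H) : Set B) ∧
      -- (iii) the span of `B_h · B_{h'}` equals `B_{h·h'}`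
      (∀ h' : H,
        Submodule.span k {x : B | ∃ a ∈ grading h, ∃ b ∈ grading h', x = a * b}
          = grading (h * h')) := by
  have τ_eq_mul (g : H) : (fun a ↦ a * τ g 1) = τ g :=
    funext fun b ↦ (apply_eq_mul_apply_one (τ_equivariant g) b).symm
  intro h
  refine ⟨?_, ?_, fun h' ↦ le_antisymm ?_ fun x hx ↦ ?_⟩
  · simpa [τ_eq_mul] using image_grading_eq_of_shift τ_grading h 1
  · rw [τ_eq_mul]
    exact (τ h).injective.injOn
  · exact Submodule.span_le.2 fun x ⟨a, ha, b, hb, hx⟩ ↦ hx ▸ mul_mem h h' a ha b hb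
  · rw [mul_comm, ← SetLike.mem_coe, ← image_grading_eq_of_shift τ_grading, ← τ_eq_mul] at hx
    obtain ⟨y, hy, rfl⟩ := hx
    exact Submodule.subset_span ⟨y, hy, τ h' 1, by simpa using τ_grading h' 1 1 one_mem, rfl⟩
end
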